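/- Define the partial order on delay functions by f ⊑ f' iff for all i, Σ_{j=0}^{i} f(j) ≤ Σ_{j=0}^{i} f'(j). If f ⊑ f' and Player O has a winning strategy in the delay game Γ_f(L), then Player O has a winning strategy in Γ_{f'}(L). -/
import Mathlib


open scoped Classical MeasureTheory

section DelayGames

variable {I O A B : Type}

/-- `shiftSeq f β = ▷^{f 0 - 1} β 0 ▷^{f 1 - 1} β 1 ⋯`, where the skip symbol `▷`
is modeled by `none` and a letter `b ∈ Σ_O` by `some b`. -/
noncomputable def shiftSeq (f : ℕ → ℕ) (β : ℕ → O) : ℕ → Option O := fun n =>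
  if h : ∃ i, (∑ j ∈ Finset.range (i + 1), f j) = n + 1 then some (β (Nat.find h))
  else none

/-- `shift_f(L) = { (α, shift_f(β)) : (α, β) ∈ L }`. -/
def shiftLang (f : ℕ → ℕ) (L : Set ((ℕ → I) × (ℕ → O))) :
    Set ((ℕ → I) × (ℕ → Option O)) :=
  {p | ∃ β : ℕ → O, (p.1, β) ∈ L ∧ p.2 = shiftSeq f β}

/-- The morphism `h` erasing the skip symbol, applied to an infinite word
(meaningful when the word has infinitely many non-skip letters). -/
noncomputable def eraseSkips [Inhabited O] (β : ℕ → Option O) : ℕ → O := fun n =>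
  (β (Nat.nth (fun k => (β k).isSome) n)).getD default

/-- `skip(L) = ⋃_f shift_f(L) = { (α,β) : β has infinitely many non-▷ letters and (α, h β) ∈ L }`. -/
def skipLang [Inhabited O] (L : Set ((ℕ → I) × (ℕ → O))) :
    Set ((ℕ → I) × (ℕ → Option O)) :=
  {p | {k | (p.2 k).isSome}.Infinite ∧ (p.1, eraseSkips p.2) ∈ L}

/-- A play of a Gale-Stewart game is consistent with the Player O strategy `σ`. -/
def gsConsO (σ : List A → B) (α : ℕ → A) (β : ℕ → B) : Prop :=
  ∀ i, β i = σ (List.ofFn fun j : Fin (i + 1) => α j)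

/-- A play of a Gale-Stewart game is consistent with the Player I strategy `τ`. -/
def gsConsI (τ : List B → A) (α : ℕ → A) (β : ℕ → B) : Prop :=
  ∀ i, α i = τ (List.ofFn fun j : Fin i => β j)

/-- `σ` is a winning strategy for Player O in the Gale-Stewart game with winning condition `W`. -/
def gsWinO (W : Set ((ℕ → A) × (ℕ → B))) (σ : List A → B) : Prop :=
  ∀ α β, gsConsO σ α β → (α, β) ∈ W

/-- `τ` is a winning strategy for Player I in the Gale-Stewart game with winning condition `W`. -/
def gsWinI (W : Set ((ℕ → A) × (ℕ → B))) (τ : List B → A) : Prop :=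
  ∀ α β, gsConsI τ α β → (α, β) ∉ W

/-- The infinite word `u 0 · u 1 · u 2 ⋯` built by Player I in a delay game
(well-defined at position `n` as soon as the first `n+1` blocks have more than `n` letters). -/
def outcomeI [Inhabited I] (u : ℕ → List I) : ℕ → I := fun n =>
  ((List.ofFn fun j : Fin (n + 1) => u j).flatten).getD n default

/-- The word `v 0 ⋯ v (i-1)` of the first `i` letters of `v`. -/
def prefixW (v : ℕ → O) (i : ℕ) : List O := List.ofFn fun j : Fin i => v j

/-- The concatenation `u 0 · u 1 ⋯ u i` of Player I's moves up to round `i`. -/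
def inputsUpTo (u : ℕ → List I) (i : ℕ) : List I :=
  (List.ofFn fun j : Fin (i + 1) => u j).flatten

/-- `τ : Σ_O^* → Σ_I^*` is a (syntactically valid) Player I strategy for the
delay game `Γ_f(L)`: it answers with `f i` letters in round `i`. -/
def delayStratI (f : ℕ → ℕ) (τ : List O → List I) : Prop :=
  ∀ w : List O, (τ w).length = f w.length

/-- `τ` is winning for Player I in the delay game `Γ_f(L)`. -/
def delayWinI [Inhabited I] (f : ℕ → ℕ) (L : Set ((ℕ → I) × (ℕ → O)))
    (τ : List O → List I) : Prop :=
  ∀ (u : ℕ → List I) (v : ℕ → O), (∀ i, (u i).length = f i) →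
    (∀ i, u i = τ (prefixW v i)) → (outcomeI u, v) ∉ L

/-- `σ : Σ_I^* → Σ_O` is winning for Player O in the delay game `Γ_f(L)`. -/
def delayWinO [Inhabited I] (f : ℕ → ℕ) (L : Set ((ℕ → I) × (ℕ → O)))
    (σ : List I → O) : Prop :=
  ∀ (u : ℕ → List I) (v : ℕ → O), (∀ i, (u i).length = f i) →
    (∀ i, v i = σ (inputsUpTo u i)) → (outcomeI u, v) ∈ L

/-- A round-counting strategy `σ : Σ_I^* × ℕ → Σ_O` is winning for Player O in `Γ_f(L)`:
in round `i` Player O plays `σ (u 0 ⋯ u i) i`. -/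
def rcWinO [Inhabited I] (f : ℕ → ℕ) (L : Set ((ℕ → I) × (ℕ → O)))
    (σ : List I → ℕ → O) : Prop :=
  ∀ (u : ℕ → List I) (v : ℕ → O), (∀ i, (u i).length = f i) →
    (∀ i, v i = σ (inputsUpTo u i) i) → (outcomeI u, v) ∈ L

/-- An output-tracking strategy `τ : Σ_O^* → Σ_I^ω` is winning for Player I in `Γ_f(L)`:
in round `i` Player I plays the length-`f i` prefix of `τ (v 0 ⋯ v (i-1))`. -/
def otWinI [Inhabited I] (f : ℕ → ℕ) (L : Set ((ℕ → I) × (ℕ → O)))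
    (τ : List O → ℕ → I) : Prop :=
  ∀ (u : ℕ → List I) (v : ℕ → O),
    (∀ i, u i = List.ofFn fun j : Fin (f i) => τ (prefixW v i) j) →
    (outcomeI u, v) ∉ L

/-- A lookahead-counting strategy `τ : Σ_O^* × ℕ → Σ_I^ω` is winning for Player I in `Γ_f(L)`:
in round `i` Player I plays the length-`f i` prefix of `τ (v 0 ⋯ v (i-1), Σ_{j<i} f j)`. -/
def lcWinI [Inhabited I] (f : ℕ → ℕ) (L : Set ((ℕ → I) × (ℕ → O)))
    (τ : List O → ℕ → ℕ → I) : Prop :=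
  ∀ (u : ℕ → List I) (v : ℕ → O),
    (∀ i, u i = List.ofFn fun j : Fin (f i) =>
      τ (prefixW v i) (∑ k ∈ Finset.range i, f k) j) →
    (outcomeI u, v) ∉ L

/-- A history-tracking strategy `τ : Σ_O^* × (ℕ_{>0})^* → Σ_I^ω` is winning for Player I
in `Γ_f(L)`: in round `i` Player I plays the length-`f i` prefix of
`τ (v 0 ⋯ v (i-1), f 0 ⋯ f (i-1))`. -/
def htWinI [Inhabited I] (f : ℕ → ℕ) (L : Set ((ℕ → I) × (ℕ → O)))
    (τ : List O → List ℕ → ℕ → I) : Prop :=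
  ∀ (u : ℕ → List I) (v : ℕ → O),
    (∀ i, u i = List.ofFn fun j : Fin (f i) => τ (prefixW v i) (prefixW f i) j) →
    (outcomeI u, v) ∉ L

/-- `f ⊑ f'` : in every round, the lookahead granted by `f'` is at least that granted by `f`. -/
def delayLE (f f' : ℕ → ℕ) : Prop :=
  ∀ i, (∑ j ∈ Finset.range (i + 1), f j) ≤ ∑ j ∈ Finset.range (i + 1), f' j

end DelayGames

section Aux

variable {I : Type} [Inhabited I]

lemma inputsUpTo_succ (u : ℕ → List I) (i : ℕ) :
    inputsUpTo u (i + 1) = inputsUpTo u i ++ u (i + 1) := by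
  unfold inputsUpTo
  rw [List.ofFn_succ']
  simp

lemma length_inputsUpTo (u : ℕ → List I) (f : ℕ → ℕ) (hu : ∀ i, (u i).length = f i)
    (i : ℕ) : (inputsUpTo u i).length = ∑ j ∈ Finset.range (i + 1), f j := by
  induction i with
  | zero => simp [inputsUpTo, hu]
  | succ i ih => rw [inputsUpTo_succ, List.length_append, ih, hu, ← Finset.sum_range_succ]

lemma lt_length_inputsUpTo (u : ℕ → List I) (f : ℕ → ℕ) (hu : ∀ i, (u i).length = f i)
    (hf : ∀ i, 0 < f i) (m : ℕ) : m < (inputsUpTo u m).length := by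
  rw [length_inputsUpTo u f hu]
  calc m < m + 1 := Nat.lt_succ_self m
    _ = ∑ _j ∈ Finset.range (m + 1), 1 := by simp
    _ ≤ ∑ j ∈ Finset.range (m + 1), f j := Finset.sum_le_sum fun j _ => hf j

lemma inputsUpTo_prefix (u : ℕ → List I) {i k : ℕ} (h : i ≤ k) :
    inputsUpTo u i <+: inputsUpTo u k := by
  induction k with
  | zero =>
    have : i = 0 := Nat.le_zero.mp h
    subst this; exact List.prefix_refl _
  | succ k ih =>
    rcases Nat.lt_or_ge i (k + 1) with h' | h'
    · exact (ih (Nat.lt_succ_iff.mp h')).trans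
        (by rw [inputsUpTo_succ]; exact List.prefix_append _ _)
    · have : i = k + 1 := le_antisymm h h'
      subst this; exact List.prefix_refl _

lemma outcomeI_eq_getElem (u : ℕ → List I) (f : ℕ → ℕ) (hu : ∀ i, (u i).length = f i)
    (hf : ∀ i, 0 < f i) (n i : ℕ) (hn : n < (inputsUpTo u i).length) :
    outcomeI u n = (inputsUpTo u i)[n] := by
  have hlen : n < (inputsUpTo u n).length := lt_length_inputsUpTo u f hu hf n
  have key : outcomeI u n = (inputsUpTo u n)[n]'hlen := by
    show ((List.ofFn fun j : Fin (n + 1) => u j).flatten).getD n default = _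
    rw [show ((List.ofFn fun j : Fin (n + 1) => u j).flatten) = inputsUpTo u n from rfl,
      List.getD_eq_getElem _ _ hlen]
  rcases le_total n i with h | h
  · rw [key]
    exact (inputsUpTo_prefix u h).getElem hlen
  · rw [key]
    exact ((inputsUpTo_prefix u h).getElem hn).symm

end Aux

/-- monotonicity. If `f ⊑ f'` and Player O wins `Γ_f(L)`,
then Player O wins `Γ_{f'}(L)`. -/
theorem stmt11 {I O : Type} [Fintype I] [Fintype O] [Inhabited I]
    (f f' : ℕ → ℕ) (hf : ∀ i, 0 < f i) (hf' : ∀ i, 0 < f' i)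
    (hle : delayLE f f') (L : Set ((ℕ → I) × (ℕ → O)))
    (hwin : ∃ σ : List I → O, delayWinO f L σ) :
    ∃ σ' : List I → O, delayWinO f' L σ' := by
  obtain ⟨σ, hσ⟩ := hwin
  set S : ℕ → ℕ := fun i => ∑ j ∈ Finset.range (i + 1), f j with hS
  set S' : ℕ → ℕ := fun i => ∑ j ∈ Finset.range (i + 1), f' j with hS'
  have hS'mono : StrictMono S' := strictMono_nat_of_lt_succ fun n => by
    simp only [hS', Finset.sum_range_succ]
    exact Nat.lt_add_of_pos_right (hf' (n + 1))
  refine ⟨fun w => if h : ∃ i, S' i = w.length then σ (w.take (S (Nat.find h))) else σ w, ?_⟩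
  intro u' v' hu' hv'
  set α : ℕ → I := outcomeI u' with hα
  set u : ℕ → List I := fun i =>
    List.ofFn fun j : Fin (f i) => α ((∑ k ∈ Finset.range i, f k) + j) with hu
  have hulen : ∀ i, (u i).length = f i := fun i => by simp [hu]
  have key : ∀ i, inputsUpTo u i = List.ofFn fun j : Fin (S i) => α j := by
    intro i
    induction i with
    | zero =>
      have h0 : S 0 = f 0 := by simp [hS]
      simp [inputsUpTo, hu, h0]
    | succ i ih =>
      have hSs : S (i + 1) = S i + f (i + 1) := by
        simp [hS, Finset.sum_range_succ]
      rw [inputsUpTo_succ, ih]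
      simp only [hSs]
      rw [List.ofFn_add]
      congr 1
  have houtu : outcomeI u = α := by
    funext n
    have hn : n < (inputsUpTo u n).length := lt_length_inputsUpTo u f hulen hf n
    rw [outcomeI_eq_getElem u f hulen hf n n hn, List.getElem_of_eq (key n)]
    simp
  set v : ℕ → O := fun i => σ (inputsUpTo u i) with hv
  have hmem : (outcomeI u, v) ∈ L := hσ u v hulen fun i => rfl
  rw [houtu] at hmem
  have hlen' : ∀ i, (inputsUpTo u' i).length = S' i := length_inputsUpTo u' f' hu'
  have hv'eq : ∀ i, v' i = v i := by
    intro i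
    simp only [hv' i]
    have hex : ∃ k, S' k = (inputsUpTo u' i).length := ⟨i, (hlen' i).symm⟩
    rw [dif_pos hex]
    have hfind : Nat.find hex = i :=
      hS'mono.injective ((Nat.find_spec hex).trans (hlen' i))
    rw [hfind]
    have htake : (inputsUpTo u' i).take (S i) = List.ofFn fun j : Fin (S i) => α j := by
      apply List.ext_getElem
      · rw [List.length_take, hlen' i, List.length_ofFn]
        exact Nat.min_eq_left (hle i)
      · intro n h1 h2
        rw [List.getElem_take]
        have hnlt : n < (inputsUpTo u' i).length := by
          rw [hlen' i]
          exact lt_of_lt_of_le (by simpa using h2) (hle i)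
        rw [← outcomeI_eq_getElem u' f' hu' hf' n i hnlt]
        simp [hα]
    rw [htake, ← key i]
  have : v' = v := funext hv'eq
  rw [this]
  exact hmem
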